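/- arXiv:1609.04884 — 2 statements merged into one kernel-verified Lean document; each statement's English description precedes it below -/
import Mathlib

section
/- Let T be a bounded operator on a complex Hilbert space H with closed range, and write T = [[A,B],[0,0]] with respect to H = R(T) ⊕ N(T*). Then R(T) + R(T*) = R(T) ⊕ R(B*), where the sum on the right is direct and orthogonal; consequently R(T) + R(T*) is closed if and only if R(B*) is closed. -/
/-!
Since `N(T*) = R(T)ᗮ`, the adjoint `T*` vanishes on `R(T)ᗮ`, so `R(T*) = T*(R(T))`;
and `B* = P_{N(T*)} ∘ T*|_{R(T)}`, so `R(B*) = P_{R(T)ᗮ}(T*(R(T)))`. Adding `R(T)`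
absorbs the `R(T)`-components, whence `R(T) + R(T*) = R(T) ⊕ R(B*)`. Finally, for a
complete subspace `K` and `M ⊆ Kᗮ`, `K ⊕ M` is closed iff `M` is: `M = (K ⊕ M) ∩ Kᗮ`,
and `K ⊕ M` is the preimage of `M` under `P_{Kᗮ}`.
-/

open ContinuousLinearMap
open scoped InnerProductSpace

variable {H : Type*} [NormedAddCommGroup H] [InnerProductSpace ℂ H] [CompleteSpace H]

noncomputable def opB (T : H →L[ℂ] H) (K N : Submodule ℂ H) [CompleteSpace K] :
    N →L[ℂ] K :=
  (K.orthogonalProjectionOnto) ∘L (T ∘L N.subtypeL)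

namespace Submodule

variable {𝕜 E : Type*} [RCLike 𝕜] [NormedAddCommGroup E] [InnerProductSpace 𝕜 E]
  (K : Submodule 𝕜 E) [K.HasOrthogonalProjection]

theorem sup_map_starProjection_orthogonal (S : Submodule 𝕜 E) :
    K ⊔ S.map (Kᗮ.starProjection : E →ₗ[𝕜] E) = K ⊔ S := by
  refine le_antisymm (sup_le le_sup_left ?_) (sup_le le_sup_left ?_)
  · rintro _ ⟨s, hs, rfl⟩
    rw [ContinuousLinearMap.coe_coe, starProjection_orthogonal_val]
    exact sub_mem (mem_sup_right hs) (mem_sup_left (K.starProjection_apply_mem s))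
  · intro s hs
    rw [← add_sub_cancel (K.starProjection s) s]
    exact add_mem (mem_sup_left (K.starProjection_apply_mem s))
      (mem_sup_right ⟨s, hs, starProjection_orthogonal_val s⟩)

theorem sup_eq_comap_starProjection_orthogonal {M : Submodule 𝕜 E} (hM : M ≤ Kᗮ) :
    K ⊔ M = M.comap (Kᗮ.starProjection : E →ₗ[𝕜] E) := by
  ext x
  constructor
  · intro hx
    obtain ⟨k, hk, m, hm, rfl⟩ := mem_sup.1 hx
    simpa [starProjection_orthogonal_val, starProjection_eq_self_iff.2 hk,
      (starProjection_apply_eq_zero_iff K).2 (hM hm)] using hm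
  · intro hx
    rw [← add_sub_cancel (K.starProjection x) x, ← starProjection_orthogonal_val]
    exact add_mem (mem_sup_left (K.starProjection_apply_mem x)) (mem_sup_right hx)

theorem isClosed_sup_iff_of_le_orthogonal {M : Submodule 𝕜 E} (hM : M ≤ Kᗮ) :
    IsClosed ((K ⊔ M : Submodule 𝕜 E) : Set E) ↔ IsClosed (M : Set E) := by
  refine ⟨fun h => ?_, fun h => ?_⟩
  · have hM_eq : (K ⊔ M) ⊓ Kᗮ = M := by
      rw [sup_comm, sup_inf_assoc_of_le K hM, inf_orthogonal_eq_bot, sup_bot_eq]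
    rw [← hM_eq]
    exact h.inter K.isClosed_orthogonal
  · rw [sup_eq_comap_starProjection_orthogonal K hM]
    exact h.preimage (starProjection Kᗮ).continuous

end Submodule

namespace ContinuousLinearMap

variable {𝕜 E F : Type*} [RCLike 𝕜] [NormedAddCommGroup E] [InnerProductSpace 𝕜 E]
  [NormedAddCommGroup F] [InnerProductSpace 𝕜 F] [CompleteSpace E] [CompleteSpace F]

theorem range_adjoint_eq_map_range (T : E →L[𝕜] F) [T.range.HasOrthogonalProjection] :
    (adjoint T).range = T.range.map (adjoint T : F →ₗ[𝕜] E) := by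
  refine le_antisymm ?_ LinearMap.map_le_range
  rintro _ ⟨x, rfl⟩
  have hker : x - T.range.starProjection x ∈ (adjoint T).ker :=
    T.orthogonal_range ▸ T.range.sub_starProjection_mem_orthogonal x
  rw [LinearMap.mem_ker, map_sub, sub_eq_zero] at hker
  exact ⟨_, T.range.starProjection_apply_mem x, hker.symm⟩

end ContinuousLinearMap

section

variable (T : H →L[ℂ] H) (K N : Submodule ℂ H) [CompleteSpace K] [CompleteSpace N]

theorem adjoint_opB :
    adjoint (opB T K N) = N.orthogonalProjectionOnto ∘L adjoint T ∘L K.subtypeL := by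
  rw [opB, adjoint_comp, adjoint_comp, Submodule.adjoint_subtypeL,
    Submodule.adjoint_orthogonalProjectionOnto]
  rfl

theorem map_subtype_range_adjoint_opB :
    (LinearMap.range (adjoint (opB T K N)).toLinearMap).map N.subtype =
      (K.map (adjoint T : H →ₗ[ℂ] H)).map (N.starProjection : H →ₗ[ℂ] H) := by
  rw [adjoint_opB, Submodule.starProjection, toLinearMap_comp, toLinearMap_comp, toLinearMap_comp,
    Submodule.toLinearMap_subtypeL, Submodule.toLinearMap_subtypeL, LinearMap.range_comp,
    LinearMap.range_comp, Submodule.range_subtype, Submodule.map_comp]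

end

theorem stmt3 (T : H →L[ℂ] H) (hT : IsClosed (LinearMap.range (T : H →ₗ[ℂ] H) : Set H)) :
    haveI : CompleteSpace (LinearMap.range (T : H →ₗ[ℂ] H)) := hT.completeSpace_coe
    haveI : CompleteSpace (LinearMap.ker (adjoint T : H →ₗ[ℂ] H)) :=
      (ContinuousLinearMap.isClosed_ker (adjoint T) :
        IsClosed (LinearMap.ker (adjoint T : H →ₗ[ℂ] H) : Set H)).completeSpace_coe
    (let B := opB T (LinearMap.range (T : H →ₗ[ℂ] H)) (LinearMap.ker (adjoint T : H →ₗ[ℂ] H))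
     let RBs : Submodule ℂ H :=
       (LinearMap.range (adjoint B).toLinearMap).map
         (LinearMap.ker (adjoint T : H →ₗ[ℂ] H)).subtype
     LinearMap.range (T : H →ₗ[ℂ] H) ⊔ LinearMap.range (adjoint T : H →ₗ[ℂ] H) =
       LinearMap.range (T : H →ₗ[ℂ] H) ⊔ RBs ∧
       (∀ x ∈ LinearMap.range (T : H →ₗ[ℂ] H), ∀ y ∈ RBs, ⟪x, y⟫_ℂ = 0) ∧
       (IsClosed ((LinearMap.range (T : H →ₗ[ℂ] H) ⊔ LinearMap.range (adjoint T : H →ₗ[ℂ] H) : Submodule ℂ H) : Set H) ↔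
         IsClosed (RBs : Set H))) := by
  intro B RBs
  set R := LinearMap.range (T : H →ₗ[ℂ] H)
  have : CompleteSpace R := hT.completeSpace_coe
  have hRBs :
      RBs = (R.map (adjoint T : H →ₗ[ℂ] H)).map (Rᗮ.starProjection : H →ₗ[ℂ] H) := by
    simpa only [← T.orthogonal_range] using
      map_subtype_range_adjoint_opB T R (LinearMap.ker (adjoint T : H →ₗ[ℂ] H))
  have hRBs_le : RBs ≤ Rᗮ :=
    hRBs ▸ LinearMap.map_le_range.trans (Rᗮ.range_starProjection).le
  have hsup : R ⊔ LinearMap.range (adjoint T : H →ₗ[ℂ] H) = R ⊔ RBs := by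
    rw [range_adjoint_eq_map_range, hRBs, Submodule.sup_map_starProjection_orthogonal]
  refine ⟨hsup, fun x hx y hy => Submodule.inner_right_of_mem_orthogonal hx (hRBs_le hy), ?_⟩
  rw [hsup, Submodule.isClosed_sup_iff_of_le_orthogonal R hRBs_le]
end

section
/- Let T be a bounded operator on a complex Hilbert space H with closed range such that T and T* coincide on R(T) ∩ R(T*). Then T maps R(T) ∩ R(T*) onto R(T) ∩ R(T*). -/
/-!
On `M = R(T) ∩ R(T*)` the operators `T` and `T*` agree, so `T` maps `M` into itself, and `T` is
bounded below on `M` because `T*` is bounded below on the closed subspace `R(T)`. By the closed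
range theorem `M` is closed, hence so is `T(M)`. If `b ∈ M` is orthogonal to `T(M)`, then
`Tb ∈ M` gives `0 = ⟪T(Tb), b⟫ = ⟪Tb, T*b⟫ = ‖Tb‖²`, so `Tb = 0` and `b = 0`; thus `T(M) = M`.
-/

open ContinuousLinearMap

variable {H : Type*} [NormedAddCommGroup H] [InnerProductSpace ℂ H] [CompleteSpace H]

open scoped InnerProduct InnerProductSpace

namespace ContinuousLinearMap

section Banach

variable {𝕜 E F : Type*} [NontriviallyNormedField 𝕜] [NormedAddCommGroup E] [NormedSpace 𝕜 E]
  [CompleteSpace E] [NormedAddCommGroup F] [NormedSpace 𝕜 F]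

theorem exists_preimage_norm_le_of_isClosed_range [CompleteSpace F] (T : E →L[𝕜] F)
    (hT : IsClosed (T.range : Set F)) :
    ∃ C > 0, ∀ y ∈ T.range, ∃ x, T x = y ∧ ‖x‖ ≤ C * ‖y‖ := by
  have : CompleteSpace T.range := hT.completeSpace_coe
  obtain ⟨C, hC, hpre⟩ := T.rangeRestrict.exists_preimage_norm_le T.surjective_rangeRestrict
  refine ⟨C, hC, fun y hy => ?_⟩
  obtain ⟨x, hx, hnorm⟩ := hpre ⟨y, hy⟩
  exact ⟨x, congrArg Subtype.val hx, hnorm⟩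

theorem isClosed_map_of_norm_le_mul_norm (T : E →L[𝕜] F) {K : Submodule 𝕜 E}
    (hK : IsClosed (K : Set E)) {C : ℝ} (hC : ∀ x ∈ K, ‖x‖ ≤ C * ‖T x‖) :
    IsClosed (K.map (T : E →ₗ[𝕜] F) : Set F) := by
  have : CompleteSpace K := hK.completeSpace_coe
  have hanti : AntilipschitzWith C.toNNReal (T.comp K.subtypeL) :=
    (T.comp K.subtypeL).antilipschitz_of_bound fun x =>
      (hC x x.2).trans (mul_le_mul_of_nonneg_right C.le_coe_toNNReal (norm_nonneg _))
  rw [Submodule.map_coe, Set.image_eq_range]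
  exact hanti.isClosed_range (T.comp K.subtypeL).uniformContinuous

end Banach

section Hilbert

variable {𝕜 E F : Type*} [RCLike 𝕜] [NormedAddCommGroup E] [InnerProductSpace 𝕜 E]
  [CompleteSpace E] [NormedAddCommGroup F] [InnerProductSpace 𝕜 F] [CompleteSpace F]

theorem exists_norm_le_mul_norm_adjoint_of_isClosed_range (T : E →L[𝕜] F)
    (hT : IsClosed (T.range : Set F)) : ∃ C, ∀ y ∈ T.range, ‖y‖ ≤ C * ‖(T†) y‖ := by
  obtain ⟨C, -, hpre⟩ := T.exists_preimage_norm_le_of_isClosed_range hT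
  refine ⟨C, fun y hy => ?_⟩
  obtain ⟨x, rfl, hx⟩ := hpre y hy
  rcases eq_or_ne (T x) 0 with h0 | h0
  · simp [h0]
  have hsq : ‖T x‖ * ‖T x‖ ≤ C * ‖(T†) (T x)‖ * ‖T x‖ :=
    calc ‖T x‖ * ‖T x‖ = ‖⟪(T†) (T x), x⟫_𝕜‖ := by
          rw [adjoint_inner_left, ← inner_self_re_eq_norm, inner_self_eq_norm_mul_norm]
      _ ≤ ‖(T†) (T x)‖ * ‖x‖ := norm_inner_le_norm _ _
      _ ≤ ‖(T†) (T x)‖ * (C * ‖T x‖) := by gcongr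
      _ = C * ‖(T†) (T x)‖ * ‖T x‖ := by ring
  exact le_of_mul_le_mul_right hsq (norm_pos_iff.mpr h0)

theorem map_adjoint_range_eq_range_adjoint (T : E →L[𝕜] F) (hT : IsClosed (T.range : Set F)) :
    T.range.map (T† : F →ₗ[𝕜] E) = (T†).range := by
  have : CompleteSpace T.range := hT.completeSpace_coe
  refine le_antisymm LinearMap.map_le_range ?_
  rintro _ ⟨y, rfl⟩
  obtain ⟨p, hp, q, hq, rfl⟩ := T.range.exists_add_mem_mem_orthogonal y
  rw [orthogonal_range] at hq
  exact ⟨p, hp, by simpa using LinearMap.mem_ker.mp hq⟩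

theorem isClosed_range_adjoint (T : E →L[𝕜] F) (hT : IsClosed (T.range : Set F)) :
    IsClosed ((T†).range : Set E) := by
  obtain ⟨C, hC⟩ := T.exists_norm_le_mul_norm_adjoint_of_isClosed_range hT
  rw [← T.map_adjoint_range_eq_range_adjoint hT]
  exact (T†).isClosed_map_of_norm_le_mul_norm hT hC

end Hilbert

section CoR

variable {𝕜 E : Type*} [RCLike 𝕜] [NormedAddCommGroup E] [InnerProductSpace 𝕜 E] [CompleteSpace E]

def IsCoR (T : E →L[𝕜] E) : Prop :=
  ∀ x ∈ T.range ⊓ (T†).range, T x = (T†) x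

variable {T : E →L[𝕜] E}

theorem IsCoR.map_range_inf_range_adjoint_le (hCoR : T.IsCoR) :
    (T.range ⊓ (T†).range).map (T : E →ₗ[𝕜] E) ≤ T.range ⊓ (T†).range := by
  rintro _ ⟨x, hx, rfl⟩
  exact ⟨LinearMap.mem_range_self _ x, hCoR x hx ▸ LinearMap.mem_range_self _ x⟩

theorem IsCoR.exists_norm_le_mul_norm (hCoR : T.IsCoR) (hT : IsClosed (T.range : Set E)) :
    ∃ C, ∀ x ∈ T.range ⊓ (T†).range, ‖x‖ ≤ C * ‖T x‖ := by
  obtain ⟨C, hC⟩ := T.exists_norm_le_mul_norm_adjoint_of_isClosed_range hT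
  exact ⟨C, fun x hx => hCoR x hx ▸ hC x hx.1⟩

theorem IsCoR.orthogonal_map_inf_eq_bot (hCoR : T.IsCoR) (hT : IsClosed (T.range : Set E)) :
    ((T.range ⊓ (T†).range).map (T : E →ₗ[𝕜] E))ᗮ ⊓ (T.range ⊓ (T†).range) = ⊥ := by
  rw [eq_bot_iff]
  rintro b ⟨hbN, hbM⟩
  have hTTb : T (T b) ∈ (T.range ⊓ (T†).range).map (T : E →ₗ[𝕜] E) :=
    ⟨T b, hCoR.map_range_inf_range_adjoint_le ⟨b, hbM, rfl⟩, rfl⟩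
  have hTb : T b = 0 := by
    rw [← inner_self_eq_zero (𝕜 := 𝕜)]
    calc ⟪T b, T b⟫_𝕜 = ⟪T b, (T†) b⟫_𝕜 := by rw [← hCoR b hbM]
      _ = ⟪T (T b), b⟫_𝕜 := adjoint_inner_right _ _ _
      _ = 0 := (Submodule.mem_orthogonal _ b).mp hbN _ hTTb
  obtain ⟨C, hC⟩ := hCoR.exists_norm_le_mul_norm hT
  simpa [hTb] using hC b hbM

end CoR

end ContinuousLinearMap

theorem stmt5 (T : H →L[ℂ] H) (hT : IsClosed (LinearMap.range (T : H →ₗ[ℂ] H) : Set H))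
    (hCoR : ∀ x ∈ LinearMap.range (T : H →ₗ[ℂ] H) ⊓ LinearMap.range (adjoint T : H →ₗ[ℂ] H), T x = adjoint T x) :
    (LinearMap.range (T : H →ₗ[ℂ] H) ⊓ LinearMap.range (adjoint T : H →ₗ[ℂ] H)).map (T : H →ₗ[ℂ] H) =
      LinearMap.range (T : H →ₗ[ℂ] H) ⊓ LinearMap.range (adjoint T : H →ₗ[ℂ] H) := by
  have hCoR : T.IsCoR := hCoR
  have hM : IsClosed ((T.range ⊓ (T†).range : Submodule ℂ H) : Set H) :=
    hT.inter (T.isClosed_range_adjoint hT)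
  obtain ⟨C, hC⟩ := hCoR.exists_norm_le_mul_norm hT
  have : CompleteSpace ((T.range ⊓ (T†).range).map (T : H →ₗ[ℂ] H)) :=
    (T.isClosed_map_of_norm_le_mul_norm hM hC).completeSpace_coe
  have hsup := Submodule.sup_orthogonal_inf_of_hasOrthogonalProjection
    hCoR.map_range_inf_range_adjoint_le
  rwa [hCoR.orthogonal_map_inf_eq_bot hT, sup_bot_eq] at hsup
end
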